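/- Let H ∈ C²(ℝ² \ {0}) be an even, positively 1-homogeneous function with H(ξ) > 0 for all ξ ≠ 0, whose unit ball B₁ᴴ = {ξ : H(ξ) < 1} is strictly convex, and which satisfies condition (7.1): for all ξ, η ∈ ℝ², ⟨H(ξ)∇H(ξ), η⟩ = 0 if and only if ⟨ξ, H(η)∇H(η)⟩ = 0. Then, up to a rotation and a homothety of the plane ℝ², the unit ball B₁ᴴ has the form {(ρ cos θ, ρ sin θ) : ρ ∈ [0, r̃(θ)], θ ∈ [0, 2π]}, where r̃ is the π-periodic extension (defined via the map τ(η) = π/2 + η − arctan(r'(η)/r(η)) and the formula r̃(θ) = r* √(r(τ⁻¹(θ))² + r'(τ⁻¹(θ))²)/r(τ⁻¹(θ))² on [π/2, π]) of some positive C² function r on [0, π/2] satisfying r r'' < 2 r'² + r² almost everywhere on [0, π/2] and r(0) = 1, r(π/2) = r* ≥ 1, r'(0) = r'(π/2) = 0. -/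

import Mathlib

/-!
Write `h θ = H (cos θ, sin θ)`, so that the unit ball of `H` is `{ρ ≤ 1 / h θ}` in polar
coordinates. By Euler's identity `∇H(e_θ) = h θ e_θ + h' θ e_θ^⊥`, so the direction orthogonal to
`Ψ(e_s)` has angle `g s = s + π/2 + arctan (h' s / h s)`, and (7.1) says that `h' / h` is
anti-invariant under `g`. Differentiating this shows that `g` has no critical point; as
`g (s + π) = g s + π`, Darboux's theorem forces `g' = h (h + h'') / (h² + h'²) > 0`, which is
condition (7.3) for `r = c / h`. The same anti-invariance makes `h (g s) * √(h² + h'²)` constant,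
which is the formula for `r̃` on `[π/2, π]`. Rotating the plane so that `h` is maximal at `0` gives
`r'(0) = 0`, hence `r'(π/2) = 0` and `r* ≥ 1`.
-/

open Real Set MeasureTheory
open scoped InnerProductSpace Classical

noncomputable section

/-- The point of `ℝ²` (as a Euclidean space) with the given coordinates. -/
def toE2 (v : Fin 2 → ℝ) : EuclideanSpace ℝ (Fin 2) := (WithLp.equiv 2 (Fin 2 → ℝ)).symm v

/-- Rotation of the plane by the angle `φ`. -/
def rot2 (φ : ℝ) (x : EuclideanSpace ℝ (Fin 2)) : EuclideanSpace ℝ (Fin 2) :=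
  toE2 ![cos φ * x 0 - sin φ * x 1, sin φ * x 0 + cos φ * x 1]

/-- The map `ξ ↦ H(ξ)∇H(ξ)`, understood to be `0` at the origin. -/
def Psi (H : EuclideanSpace ℝ (Fin 2) → ℝ) (ξ : EuclideanSpace ℝ (Fin 2)) :
    EuclideanSpace ℝ (Fin 2) :=
  if ξ = 0 then 0 else H ξ • gradient H ξ

local notation "ℝ²" => EuclideanSpace ℝ (Fin 2)

def unitVec (θ : ℝ) : ℝ² := toE2 ![cos θ, sin θ]

@[simp] lemma toE2_apply (v : Fin 2 → ℝ) (i : Fin 2) : toE2 v i = v i := rfl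

@[simp] lemma unitVec_apply_zero (θ : ℝ) : unitVec θ 0 = cos θ := rfl

@[simp] lemma unitVec_apply_one (θ : ℝ) : unitVec θ 1 = sin θ := rfl

lemma ext_fin_two {x y : ℝ²} (h0 : x 0 = y 0) (h1 : x 1 = y 1) : x = y := by
  ext i; fin_cases i <;> assumption

lemma inner_eq_fin_two (x y : ℝ²) : ⟪x, y⟫_ℝ = x 0 * y 0 + x 1 * y 1 := by
  simp [PiLp.inner_apply, Fin.sum_univ_two, mul_comm]

lemma inner_unitVec (α β : ℝ) : ⟪unitVec α, unitVec β⟫_ℝ = cos (β - α) := by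
  rw [inner_eq_fin_two, cos_sub]; simp only [unitVec_apply_zero, unitVec_apply_one]; ring

lemma unitVec_ne_zero (θ : ℝ) : unitVec θ ≠ 0 := by
  intro h
  have := inner_unitVec θ θ
  rw [h, inner_zero_left, sub_self, cos_zero] at this
  exact zero_ne_one this

lemma unitVec_add_pi (θ : ℝ) : unitVec (θ + π) = -unitVec θ :=
  ext_fin_two (by simp [cos_add_pi]) (by simp [sin_add_pi])

lemma unitVec_periodic : Function.Periodic unitVec (2 * π) := fun θ =>
  ext_fin_two (by simp) (by simp)

lemma smul_unitVec (ρ θ : ℝ) : ρ • unitVec θ = toE2 ![ρ * cos θ, ρ * sin θ] :=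
  ext_fin_two (by simp) (by simp)

lemma unitVec_eq (θ : ℝ) : unitVec θ = cos θ • toE2 ![1, 0] + sin θ • toE2 ![0, 1] :=
  ext_fin_two (by simp) (by simp)

lemma hasDerivAt_unitVec (θ : ℝ) : HasDerivAt unitVec (unitVec (θ + π / 2)) θ := by
  rw [unitVec_eq (θ + π / 2), cos_add_pi_div_two, sin_add_pi_div_two, funext unitVec_eq]
  exact ((hasDerivAt_cos θ).smul_const _).add ((hasDerivAt_sin θ).smul_const _)

lemma contDiff_unitVec {n : WithTop ℕ∞} : ContDiff ℝ n unitVec := by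
  rw [funext unitVec_eq]
  exact (contDiff_cos.smul contDiff_const).add (contDiff_sin.smul contDiff_const)

lemma eq_inner_smul_unitVec_add_inner_smul_unitVec (v : ℝ²) (θ : ℝ) :
    v = ⟪v, unitVec θ⟫_ℝ • unitVec θ + ⟪v, unitVec (θ + π / 2)⟫_ℝ • unitVec (θ + π / 2) := by
  have hsc := sin_sq_add_cos_sq θ
  refine ext_fin_two ?_ ?_ <;>
    simp only [inner_eq_fin_two, PiLp.add_apply, PiLp.smul_apply, smul_eq_mul, unitVec_apply_zero,
      unitVec_apply_one, cos_add_pi_div_two, sin_add_pi_div_two] <;>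
    linear_combination (-(v _)) * hsc

lemma rot2_smul_unitVec (φ ρ θ : ℝ) : rot2 φ (ρ • unitVec θ) = ρ • unitVec (θ + φ) :=
  ext_fin_two (by simp [rot2, cos_add]; ring) (by simp [rot2, sin_add]; ring)

lemma rot2_neg_rot2 (φ : ℝ) (x : ℝ²) : rot2 (-φ) (rot2 φ x) = x := by
  have hsc := sin_sq_add_cos_sq φ
  refine ext_fin_two ?_ ?_ <;> simp only [rot2, toE2_apply, cos_neg, sin_neg] <;> simp
  · linear_combination (x 0) * hsc
  · linear_combination (x 1) * hsc

lemma exists_eq_smul_unitVec (ξ : ℝ²) :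
    ∃ ρ θ : ℝ, 0 ≤ ρ ∧ θ ∈ Ico 0 (2 * π) ∧ ξ = ρ • unitVec θ := by
  set z : ℂ := ⟨ξ 0, ξ 1⟩
  obtain ⟨θ, hθ, hz⟩ := unitVec_periodic.exists_mem_Ico₀ two_pi_pos z.arg
  refine ⟨‖z‖, θ, norm_nonneg z, hθ, ?_⟩
  rw [← hz]
  exact ext_fin_two (by simp [Complex.norm_mul_cos_arg, z]) (by simp [Complex.norm_mul_sin_arg, z])

section Homogeneous

variable {E : Type*} [NormedAddCommGroup E] [NormedSpace ℝ E] {H : E → ℝ}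

lemma apply_smul_of_nonneg (hhom : ∀ t : ℝ, 0 < t → ∀ ξ : E, ξ ≠ 0 → H (t • ξ) = t * H ξ)
    (hH0 : H 0 = 0) {t : ℝ} (ht : 0 ≤ t) (ξ : E) : H (t • ξ) = t * H ξ := by
  rcases ht.eq_or_lt with rfl | ht
  · simp [hH0]
  rcases eq_or_ne ξ 0 with rfl | hξ
  · simp [hH0]
  exact hhom t ht ξ hξ

lemma fderiv_apply_self_of_homogeneous {ξ : E} (hH : DifferentiableAt ℝ H ξ)
    (hhom : ∀ t : ℝ, 0 < t → H (t • ξ) = t * H ξ) : fderiv ℝ H ξ ξ = H ξ := by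
  have hray : HasDerivAt (fun t : ℝ => H (t • ξ)) (fderiv ℝ H ξ ξ) 1 := by
    have hH1 : HasFDerivAt H (fderiv ℝ H ξ) ((1 : ℝ) • ξ) := by
      rw [one_smul]; exact hH.hasFDerivAt
    simpa [Function.comp_def] using
      hH1.comp_hasDerivAt (1 : ℝ) ((hasDerivAt_id (1 : ℝ)).smul_const ξ)
  have hlin : (fun t : ℝ => H (t • ξ)) =ᶠ[nhds 1] fun t => t * H ξ := by
    filter_upwards [eventually_gt_nhds one_pos] with t ht using hhom t ht
  exact (hray.congr_of_eventuallyEq hlin.symm).unique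
    (by simpa using (hasDerivAt_id (1 : ℝ)).mul_const (H ξ))

end Homogeneous

section Gradient

variable {H : ℝ² → ℝ}

lemma gradient_unitVec {θ : ℝ} (hH : DifferentiableAt ℝ H (unitVec θ))
    (hhom : ∀ t : ℝ, 0 < t → H (t • unitVec θ) = t * H (unitVec θ)) :
    gradient H (unitVec θ) =
      H (unitVec θ) • unitVec θ + deriv (fun s => H (unitVec s)) θ • unitVec (θ + π / 2) := by
  have hradial : ⟪gradient H (unitVec θ), unitVec θ⟫_ℝ = H (unitVec θ) := by
    rw [inner_gradient_left, fderiv_apply_self_of_homogeneous hH hhom]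
  have hangular : ⟪gradient H (unitVec θ), unitVec (θ + π / 2)⟫_ℝ =
      deriv (fun s => H (unitVec s)) θ := by
    rw [inner_gradient_left]
    exact ((hH.hasFDerivAt.comp_hasDerivAt θ (hasDerivAt_unitVec θ)).deriv).symm
  rw [← hradial, ← hangular]
  exact eq_inner_smul_unitVec_add_inner_smul_unitVec _ θ

lemma inner_Psi_unitVec {α : ℝ} (hH : DifferentiableAt ℝ H (unitVec α))
    (hhom : ∀ t : ℝ, 0 < t → H (t • unitVec α) = t * H (unitVec α)) (β : ℝ) :
    ⟪Psi H (unitVec α), unitVec β⟫_ℝ = H (unitVec α) *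
      (H (unitVec α) * cos (β - α) + deriv (fun s => H (unitVec s)) α * sin (β - α)) := by
  rw [Psi, if_neg (unitVec_ne_zero α), gradient_unitVec hH hhom, real_inner_smul_left,
    inner_add_left, real_inner_smul_left, real_inner_smul_left, inner_unitVec, inner_unitVec,
    sub_add_eq_sub_sub, cos_sub_pi_div_two]

end Gradient

lemma Function.Periodic.deriv {𝕜 F : Type*} [NontriviallyNormedField 𝕜] [NormedAddCommGroup F]
    [NormedSpace 𝕜 F] {f : 𝕜 → F} {c : 𝕜} (hf : Function.Periodic f c) :
    Function.Periodic (deriv f) c := fun s => by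
  rw [← deriv_comp_add_const, show (fun x => f (x + c)) = f from funext hf]

section ConjugateAngle

/-- For `h θ = H (unitVec θ)`, `conjAngle h s` is the angle of the direction orthogonal to
`Psi H (unitVec s)`. -/
def conjAngle (h : ℝ → ℝ) (s : ℝ) : ℝ := s + π / 2 + arctan (deriv h s / h s)

variable {h : ℝ → ℝ}

lemma conjAngle_add_of_periodic {c : ℝ} (hper : Function.Periodic h c) (s : ℝ) :
    conjAngle h (s + c) = conjAngle h s + c := by
  simp only [conjAngle, hper s, hper.deriv s]; ring

lemma conjAngle_of_deriv_eq_zero {s : ℝ} (hs : deriv h s = 0) : conjAngle h s = s + π / 2 := by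
  simp [conjAngle, hs]

lemma hasDerivAt_deriv_div_self {s : ℝ} (hd : DifferentiableAt ℝ h s)
    (hd2 : DifferentiableAt ℝ (deriv h) s) (hs : h s ≠ 0) :
    HasDerivAt (fun s => deriv h s / h s)
      ((deriv (deriv h) s * h s - deriv h s * deriv h s) / h s ^ 2) s :=
  hd2.hasDerivAt.div hd.hasDerivAt hs

lemma hasDerivAt_conjAngle {s : ℝ} (hd : DifferentiableAt ℝ h s)
    (hd2 : DifferentiableAt ℝ (deriv h) s) (hs : h s ≠ 0) :
    HasDerivAt (conjAngle h)
      (h s * (h s + deriv (deriv h) s) / (h s ^ 2 + deriv h s ^ 2)) s := by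
  have := (((hasDerivAt_id s).add_const (π / 2)).add (hasDerivAt_deriv_div_self hd hd2 hs).arctan)
  refine this.congr_deriv ?_
  field_simp
  ring

end ConjugateAngle

/-- The angular profile `θ ↦ H (unitVec θ)` of an `H` as in the theorem; `conj` is condition (7.1)
read on unit vectors. -/
structure IsAnisotropyProfile (h : ℝ → ℝ) : Prop where
  contDiff : ContDiff ℝ 2 h
  pos : ∀ s, 0 < h s
  periodic : Function.Periodic h π
  conj : ∀ s, deriv h (conjAngle h s) / h (conjAngle h s) = -(deriv h s / h s)

namespace IsAnisotropyProfile

variable {h : ℝ → ℝ}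

lemma differentiable (P : IsAnisotropyProfile h) : Differentiable ℝ h :=
  P.contDiff.differentiable (by norm_num)

lemma differentiable_deriv (P : IsAnisotropyProfile h) : Differentiable ℝ (deriv h) :=
  (P.contDiff.deriv' (n := 1)).differentiable (by norm_num)

lemma comp_add_const (P : IsAnisotropyProfile h) (a : ℝ) :
    IsAnisotropyProfile (fun s => h (s + a)) where
  contDiff := P.contDiff.comp (contDiff_id.add contDiff_const)
  pos s := P.pos (s + a)
  periodic s := by simp only [add_right_comm s π a, P.periodic (s + a)]
  conj s := by
    have hangle : conjAngle (fun s => h (s + a)) s = conjAngle h (s + a) - a := by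
      simp only [conjAngle, deriv_comp_add_const]; ring
    simpa only [deriv_comp_add_const, hangle, sub_add_cancel] using P.conj (s + a)

lemma hasDerivAt_conjAngle (P : IsAnisotropyProfile h) (s : ℝ) :
    HasDerivAt (conjAngle h)
      (h s * (h s + deriv (deriv h) s) / (h s ^ 2 + deriv h s ^ 2)) s :=
  _root_.hasDerivAt_conjAngle (P.differentiable s) (P.differentiable_deriv s) (P.pos s).ne'

lemma add_deriv_deriv_ne_zero (P : IsAnisotropyProfile h) (s : ℝ) :
    h s + deriv (deriv h) s ≠ 0 := by
  intro hcrit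
  have hs := (P.pos s).ne'
  have hq := fun s => hasDerivAt_deriv_div_self (P.differentiable s) (P.differentiable_deriv s)
    (P.pos s).ne'
  have hcomp := (hq (conjAngle h s)).comp s (P.hasDerivAt_conjAngle s)
  rw [hcrit, mul_zero, zero_div, mul_zero] at hcomp
  have hneg : HasDerivAt (fun s => -(deriv h s / h s)) 0 s := by
    simpa only [Function.comp_def, P.conj] using hcomp
  have hq0 := (hq s).neg.unique hneg
  rw [neg_eq_zero, div_eq_zero_iff, sub_eq_zero, eq_neg_of_add_eq_zero_right hcrit] at hq0
  rcases hq0 with hq0 | hq0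
  · nlinarith [P.pos s, sq_nonneg (deriv h s)]
  · exact pow_ne_zero 2 hs hq0

lemma add_deriv_deriv_pos (P : IsAnisotropyProfile h) (s : ℝ) :
    0 < h s + deriv (deriv h) s := by
  have hden : ∀ s, 0 < h s ^ 2 + deriv h s ^ 2 := fun s => by
    nlinarith [P.pos s, sq_nonneg (deriv h s)]
  have hne : ∀ x ∈ univ, h x * (h x + deriv (deriv h) x) / (h x ^ 2 + deriv h x ^ 2) ≠ 0 :=
    fun x _ => div_ne_zero (mul_ne_zero (P.pos x).ne' (P.add_deriv_deriv_ne_zero x)) (hden x).ne'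
  rcases hasDerivWithinAt_forall_lt_or_forall_gt_of_forall_ne convex_univ
    (fun x _ => (P.hasDerivAt_conjAngle x).hasDerivWithinAt) hne with hneg | hpos
  · have hanti := strictAnti_of_hasDerivAt_neg P.hasDerivAt_conjAngle (fun x => hneg x trivial)
    have := hanti pi_pos
    rw [← zero_add π, conjAngle_add_of_periodic P.periodic] at this
    linarith [pi_pos]
  · exact pos_of_mul_pos_right ((div_pos_iff_of_pos_right (hden s)).mp (hpos s trivial))
      (P.pos s).le

lemma apply_conjAngle_mul_sqrt_eq (P : IsAnisotropyProfile h) (s t : ℝ) :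
    h (conjAngle h s) * √(h s ^ 2 + deriv h s ^ 2) =
      h (conjAngle h t) * √(h t ^ 2 + deriv h t ^ 2) := by
  have hQ : ∀ s, 0 < h s ^ 2 + deriv h s ^ 2 := fun s => by
    nlinarith [P.pos s, sq_nonneg (deriv h s)]
  have hconst :
      ∀ s, HasDerivAt (fun s => h (conjAngle h s) * √(h s ^ 2 + deriv h s ^ 2)) 0 s := by
    intro s
    have hS := (((P.differentiable s).hasDerivAt.pow 2).add
      ((P.differentiable_deriv s).hasDerivAt.pow 2)).sqrt (hQ s).ne'
    have hg := (P.differentiable _).hasDerivAt.comp s (P.hasDerivAt_conjAngle s)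
    refine (hg.mul hS).congr_deriv ?_
    have hconj : deriv h (conjAngle h s) = -(deriv h s / h s) * h (conjAngle h s) :=
      (div_eq_iff (P.pos _).ne').mp (P.conj s)
    have hsq := Real.sq_sqrt (hQ s).le
    have hS0 := (Real.sqrt_pos.mpr (hQ s)).ne'
    have := (P.pos s).ne'
    simp only [Pi.add_apply, Pi.pow_apply, Function.comp_apply, hconj]
    field_simp
    linear_combination (-2 * h (conjAngle h s) * deriv h s * (h s + deriv (deriv h) s)) * hsq
  exact is_const_of_deriv_eq_zero (fun s => (hconst s).differentiableAt)
    (fun s => (hconst s).deriv) s t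

lemma exists_forall_le (P : IsAnisotropyProfile h) : ∃ s₀, ∀ s, h s ≤ h s₀ := by
  obtain ⟨_, ⟨s₀, rfl⟩, hmax⟩ := (P.periodic.compact_of_continuous pi_ne_zero
    P.contDiff.continuous).exists_isGreatest (range_nonempty h)
  exact ⟨s₀, fun s => hmax ⟨s, rfl⟩⟩

lemma deriv_add_pi_div_two_eq_zero (P : IsAnisotropyProfile h) {s : ℝ} (hs : deriv h s = 0) :
    deriv h (s + π / 2) = 0 := by
  have := P.conj s
  rwa [conjAngle_of_deriv_eq_zero hs, hs, zero_div, neg_zero, div_eq_zero_iff,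
    or_iff_left (P.pos _).ne'] at this

end IsAnisotropyProfile

lemma isAnisotropyProfile_comp_unitVec {H : ℝ² → ℝ} (hreg : ContDiffOn ℝ 2 H {0}ᶜ)
    (heven : ∀ ξ, H (-ξ) = H ξ) (hhom : ∀ t : ℝ, 0 < t → ∀ ξ : ℝ², ξ ≠ 0 → H (t • ξ) = t * H ξ)
    (hpos : ∀ ξ : ℝ², ξ ≠ 0 → 0 < H ξ)
    (h71 : ∀ ξ η : ℝ², (⟪Psi H ξ, η⟫_ℝ = 0 ↔ ⟪ξ, Psi H η⟫_ℝ = 0)) :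
    IsAnisotropyProfile (fun s => H (unitVec s)) := by
  set h := fun s => H (unitVec s)
  have hpos' : ∀ s, 0 < h s := fun s => hpos _ (unitVec_ne_zero s)
  have hinner : ∀ α β, ⟪Psi H (unitVec α), unitVec β⟫_ℝ =
      h α * (h α * cos (β - α) + deriv h α * sin (β - α)) := fun α =>
    inner_Psi_unitVec ((hreg.contDiffAt (isOpen_compl_singleton.mem_nhds (unitVec_ne_zero α))
      ).differentiableAt (by norm_num)) (fun t ht => hhom t ht _ (unitVec_ne_zero α))
  refine ⟨hreg.comp_contDiff contDiff_unitVec (fun s => unitVec_ne_zero s), hpos',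
    fun s => by simp only [h, unitVec_add_pi, heven], fun s => ?_⟩
  set q := deriv h s / h s
  have hq : deriv h s = q * h s := (div_mul_cancel₀ _ (hpos' s).ne').symm
  have hcos := cos_arctan_pos q
  have hsin : sin (arctan q) = q * cos (arctan q) := by
    rw [sin_arctan, cos_arctan, mul_one_div]
  have hg : conjAngle h s = s + (arctan q + π / 2) := by rw [conjAngle]; ring
  have horth : ⟪Psi H (unitVec s), unitVec (conjAngle h s)⟫_ℝ = 0 := by
    rw [hinner, hg, add_sub_cancel_left, cos_add_pi_div_two, sin_add_pi_div_two, hsin, hq]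
    ring
  have hback := (h71 _ _).mp horth
  rw [real_inner_comm, hinner, hg, sub_add_cancel_left, cos_neg, sin_neg, cos_add_pi_div_two,
    sin_add_pi_div_two, hsin, mul_eq_zero, or_iff_right (hpos' _).ne'] at hback
  rw [hg, div_eq_iff (hpos' _).ne']
  nlinarith [hcos]

lemma eqOn_derivWithin_Icc {f f' : ℝ → ℝ} {a b : ℝ} (hab : a < b)
    (hf : ∀ x, HasDerivAt f (f' x) x) : EqOn (derivWithin f (Icc a b)) f' (Icc a b) :=
  fun x hx => (hf x).hasDerivWithinAt.derivWithin (uniqueDiffOn_Icc hab x hx)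

lemma eqOn_derivWithin_derivWithin_Icc {f f' f'' : ℝ → ℝ} {a b : ℝ} (hab : a < b)
    (hf : ∀ x, HasDerivAt f (f' x) x) (hf' : ∀ x, HasDerivAt f' (f'' x) x) :
    EqOn (derivWithin (derivWithin f (Icc a b)) (Icc a b)) f'' (Icc a b) := fun x hx => by
  rw [derivWithin_congr (eqOn_derivWithin_Icc hab hf) (eqOn_derivWithin_Icc hab hf hx)]
  exact eqOn_derivWithin_Icc hab hf' hx

/-- In the frame rotated so that `h` is maximal at `0`, `θ ↦ 1 / h θ` is the polar radius of the
unit ball of `H`; dividing by its value `1 / h 0` at `0` gives the `r` of the theorem. -/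
def normalizedRadius (h : ℝ → ℝ) (θ : ℝ) : ℝ := h 0 / h θ

namespace IsAnisotropyProfile

variable {h : ℝ → ℝ}

lemma normalizedRadius_pos (P : IsAnisotropyProfile h) (θ : ℝ) : 0 < normalizedRadius h θ :=
  div_pos (P.pos 0) (P.pos θ)

lemma normalizedRadius_zero (P : IsAnisotropyProfile h) : normalizedRadius h 0 = 1 :=
  div_self (P.pos 0).ne'

lemma periodic_normalizedRadius (P : IsAnisotropyProfile h) :
    Function.Periodic (normalizedRadius h) π := fun θ => by
  simp only [normalizedRadius, P.periodic θ]

lemma contDiff_normalizedRadius (P : IsAnisotropyProfile h) :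
    ContDiff ℝ 2 (normalizedRadius h) :=
  contDiff_const.div P.contDiff fun θ => (P.pos θ).ne'

lemma hasDerivAt_normalizedRadius (P : IsAnisotropyProfile h) (θ : ℝ) :
    HasDerivAt (normalizedRadius h) (-(h 0 * deriv h θ) / h θ ^ 2) θ := by
  refine ((hasDerivAt_const θ (h 0)).div (P.differentiable θ).hasDerivAt
    (P.pos θ).ne').congr_deriv ?_
  ring

lemma hasDerivAt_deriv_normalizedRadius (P : IsAnisotropyProfile h) (θ : ℝ) :
    HasDerivAt (fun θ => -(h 0 * deriv h θ) / h θ ^ 2)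
      (-(h 0 * deriv (deriv h) θ) / h θ ^ 2 + 2 * h 0 * deriv h θ ^ 2 / h θ ^ 3) θ := by
  have hθ := (P.pos θ).ne'
  refine ((((P.differentiable_deriv θ).hasDerivAt.const_mul (h 0)).neg).div
    ((P.differentiable θ).hasDerivAt.pow 2) (pow_ne_zero 2 hθ)).congr_deriv ?_
  simp only [Pi.neg_apply, Pi.pow_apply]
  field_simp
  ring

variable {a b : ℝ}

lemma derivWithin_normalizedRadius (P : IsAnisotropyProfile h) (hab : a < b) {θ : ℝ}
    (hθ : θ ∈ Icc a b) :
    derivWithin (normalizedRadius h) (Icc a b) θ = -(h 0 * deriv h θ) / h θ ^ 2 :=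
  eqOn_derivWithin_Icc hab P.hasDerivAt_normalizedRadius hθ

lemma derivWithin_derivWithin_normalizedRadius (P : IsAnisotropyProfile h) (hab : a < b)
    {θ : ℝ} (hθ : θ ∈ Icc a b) :
    derivWithin (derivWithin (normalizedRadius h) (Icc a b)) (Icc a b) θ =
      -(h 0 * deriv (deriv h) θ) / h θ ^ 2 + 2 * h 0 * deriv h θ ^ 2 / h θ ^ 3 :=
  eqOn_derivWithin_derivWithin_Icc hab P.hasDerivAt_normalizedRadius
    P.hasDerivAt_deriv_normalizedRadius hθ

/-- Condition (7.3): for `r = c / h` one has `2 r'² + r² - r r'' = c² (h + h'') / h³`. -/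
lemma normalizedRadius_mul_lt (P : IsAnisotropyProfile h) (hab : a < b) {θ : ℝ}
    (hθ : θ ∈ Icc a b) :
    normalizedRadius h θ * derivWithin (derivWithin (normalizedRadius h) (Icc a b)) (Icc a b) θ <
      2 * derivWithin (normalizedRadius h) (Icc a b) θ ^ 2 + normalizedRadius h θ ^ 2 := by
  rw [P.derivWithin_derivWithin_normalizedRadius hab hθ, P.derivWithin_normalizedRadius hab hθ,
    normalizedRadius, ← sub_pos]
  have hθpos := P.pos θ
  have key : 0 < h 0 ^ 2 * ((h θ + deriv (deriv h) θ) / h θ ^ 3) := by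
    have := P.add_deriv_deriv_pos θ
    have := P.pos 0
    positivity
  convert key using 1
  field_simp
  ring

/-- The identity defining `r̃` on `[π/2, π]`: the angle `τ η` is `conjAngle h η`, and
`h (conjAngle h η) * √(h η ^ 2 + h' η ^ 2)` is constant. -/
lemma normalizedRadius_conj (P : IsAnisotropyProfile h) (h0 : deriv h 0 = 0) (hab : a < b)
    {η : ℝ} (hη : η ∈ Icc a b) :
    normalizedRadius h
        (π / 2 + η - arctan (derivWithin (normalizedRadius h) (Icc a b) η / normalizedRadius h η)) =
      normalizedRadius h (π / 2) *
        √(normalizedRadius h η ^ 2 + derivWithin (normalizedRadius h) (Icc a b) η ^ 2) /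
          normalizedRadius h η ^ 2 := by
  have hη0 := (P.pos η).ne'
  have hc := (P.pos 0).ne'
  rw [P.derivWithin_normalizedRadius hab hη]
  have hangle : π / 2 + η - arctan (-(h 0 * deriv h η) / h η ^ 2 / normalizedRadius h η) =
      conjAngle h η := by
    rw [normalizedRadius, show -(h 0 * deriv h η) / h η ^ 2 / (h 0 / h η) = -(deriv h η / h η) by
      field_simp, arctan_neg, conjAngle]
    ring
  have hsum : normalizedRadius h η ^ 2 + (-(h 0 * deriv h η) / h η ^ 2) ^ 2 =
      (h 0 / h η ^ 2) ^ 2 * (h η ^ 2 + deriv h η ^ 2) := by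
    rw [normalizedRadius]
    field_simp
  have hconst := P.apply_conjAngle_mul_sqrt_eq η 0
  rw [conjAngle_of_deriv_eq_zero h0, h0, zero_add, zero_pow two_ne_zero, add_zero,
    Real.sqrt_sq (P.pos 0).le] at hconst
  rw [hangle, hsum, Real.sqrt_mul (sq_nonneg _),
    Real.sqrt_sq (div_pos (P.pos 0) (pow_pos (P.pos η) 2)).le]
  have := (P.pos (conjAngle h η)).ne'
  have := (P.pos (π / 2)).ne'
  simp only [normalizedRadius]
  field_simp
  linear_combination -hconst

end IsAnisotropyProfile

lemma image_smul_rot2_sublevel {H : ℝ² → ℝ}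
    (hhom : ∀ t : ℝ, 0 < t → ∀ ξ : ℝ², ξ ≠ 0 → H (t • ξ) = t * H ξ) (hH0 : H 0 = 0)
    (hpos : ∀ ξ : ℝ², ξ ≠ 0 → 0 < H ξ) {c : ℝ} (hc : 0 < c) (s₀ : ℝ) :
    (fun ξ : ℝ² => c • rot2 (-s₀) ξ) '' {ξ | H ξ ≤ 1} =
      {p | ∃ ρ θ : ℝ, 0 ≤ ρ ∧ ρ ≤ c / H (unitVec (θ + s₀)) ∧ θ ∈ Icc 0 (2 * π) ∧
        p = toE2 ![ρ * cos θ, ρ * sin θ]} := by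
  have hsub : ∀ ρ θ : ℝ, 0 ≤ ρ →
      (H ((ρ / c) • unitVec (θ + s₀)) ≤ 1 ↔ ρ ≤ c / H (unitVec (θ + s₀))) := fun ρ θ hρ => by
    rw [apply_smul_of_nonneg hhom hH0 (div_nonneg hρ hc.le), div_mul_eq_mul_div, div_le_one hc,
      le_div_iff₀ (hpos _ (unitVec_ne_zero _))]
  have hmap : ∀ ρ θ : ℝ, c • rot2 (-s₀) ((ρ / c) • unitVec (θ + s₀)) = ρ • unitVec θ :=
    fun ρ θ => by rw [rot2_smul_unitVec, add_neg_cancel_right, smul_smul, mul_div_cancel₀ _ hc.ne']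
  have hinj : Function.Injective (fun ξ : ℝ² => c • rot2 (-s₀) ξ) :=
    (smul_right_injective ℝ² hc.ne').comp (Function.LeftInverse.injective (rot2_neg_rot2 (-s₀)))
  ext p
  simp only [mem_image, mem_ofPred_eq, ← smul_unitVec]
  constructor
  · rintro ⟨ξ, hξ, rfl⟩
    obtain ⟨ρ, θ, hρ, hθ, hpolar⟩ := exists_eq_smul_unitVec (c • rot2 (-s₀) ξ)
    obtain rfl : ξ = (ρ / c) • unitVec (θ + s₀) := hinj (hpolar.trans (hmap ρ θ).symm)
    exact ⟨ρ, θ, hρ, (hsub ρ θ hρ).mp hξ, Ico_subset_Icc_self hθ, hpolar⟩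
  · rintro ⟨ρ, θ, hρ, hle, -, rfl⟩
    exact ⟨_, (hsub ρ θ hρ).mpr hle, hmap ρ θ⟩

theorem planar_classification_general (H : EuclideanSpace ℝ (Fin 2) → ℝ)
    (hreg : ContDiffOn ℝ 2 H {(0 : EuclideanSpace ℝ (Fin 2))}ᶜ)
    (heven : ∀ ξ : EuclideanSpace ℝ (Fin 2), H (-ξ) = H ξ)
    (hhom : ∀ t : ℝ, 0 < t → ∀ ξ : EuclideanSpace ℝ (Fin 2), ξ ≠ 0 → H (t • ξ) = t * H ξ)
    (hpos : ∀ ξ : EuclideanSpace ℝ (Fin 2), ξ ≠ 0 → 0 < H ξ) (hH0 : H 0 = 0)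
    (h71 : ∀ ξ η : EuclideanSpace ℝ (Fin 2),
      (⟪Psi H ξ, η⟫_ℝ = 0 ↔ ⟪ξ, Psi H η⟫_ℝ = 0)) :
    ∃ φ c : ℝ, 0 < c ∧ ∃ rstar : ℝ, 1 ≤ rstar ∧ ∃ r r1 r2 rt tau : ℝ → ℝ,
      r1 = derivWithin r (Icc 0 (π / 2)) ∧
      r2 = derivWithin r1 (Icc 0 (π / 2)) ∧
      ContDiffOn ℝ 2 r (Icc 0 (π / 2)) ∧
      (∀ θ ∈ Icc (0 : ℝ) (π / 2), 0 < r θ) ∧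
      (∀ᵐ θ ∂(volume : Measure ℝ), θ ∈ Icc (0 : ℝ) (π / 2) →
        r θ * r2 θ < 2 * r1 θ ^ 2 + r θ ^ 2) ∧
      r 0 = 1 ∧ r (π / 2) = rstar ∧ r1 0 = 0 ∧ r1 (π / 2) = 0 ∧
      (∀ η : ℝ, tau η = π / 2 + η - arctan (r1 η / r η)) ∧
      (∀ θ : ℝ, 0 < rt θ) ∧ Function.Periodic rt π ∧
      (∀ θ ∈ Icc (0 : ℝ) (π / 2), rt θ = r θ) ∧
      (∀ η ∈ Icc (0 : ℝ) (π / 2),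
        rt (tau η) = rstar * Real.sqrt (r η ^ 2 + r1 η ^ 2) / r η ^ 2) ∧
      (fun ξ : EuclideanSpace ℝ (Fin 2) => c • rot2 φ ξ) '' {ξ | H ξ ≤ 1}
        = {p : EuclideanSpace ℝ (Fin 2) | ∃ ρ θ : ℝ,
            0 ≤ ρ ∧ ρ ≤ rt θ ∧ θ ∈ Icc (0 : ℝ) (2 * π) ∧
            p = toE2 ![ρ * cos θ, ρ * sin θ]} := by
  have P₀ := isAnisotropyProfile_comp_unitVec hreg heven hhom hpos h71
  obtain ⟨s₀, hmax⟩ := P₀.exists_forall_le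
  set h := fun s => H (unitVec (s + s₀))
  have P : IsAnisotropyProfile h := P₀.comp_add_const s₀
  have hmax₀ : ∀ s, h s ≤ h 0 := fun s => by simpa [h] using hmax (s + s₀)
  have hcrit : deriv h 0 = 0 := IsLocalMax.deriv_eq_zero (Filter.Eventually.of_forall hmax₀)
  have hcrit' : deriv h (π / 2) = 0 := by simpa using P.deriv_add_pi_div_two_eq_zero hcrit
  have hI : (0 : ℝ) < π / 2 := pi_div_two_pos
  refine ⟨-s₀, h 0, P.pos 0, normalizedRadius h (π / 2), (one_le_div (P.pos _)).mpr (hmax₀ _),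
    normalizedRadius h, _, _, normalizedRadius h, _, rfl, rfl,
    P.contDiff_normalizedRadius.contDiffOn, fun θ _ => P.normalizedRadius_pos θ,
    ae_of_all _ fun θ => P.normalizedRadius_mul_lt hI, P.normalizedRadius_zero, rfl, ?_, ?_,
    fun _ => rfl, P.normalizedRadius_pos, P.periodic_normalizedRadius, fun _ _ => rfl,
    fun η => P.normalizedRadius_conj hcrit hI, image_smul_rot2_sublevel hhom hH0 hpos (P.pos 0) s₀⟩
  · simp [P.derivWithin_normalizedRadius hI ⟨le_rfl, hI.le⟩, hcrit]
  · simp [P.derivWithin_normalizedRadius hI ⟨hI.le, le_rfl⟩, hcrit']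

/-- second part of Proposition 1.3 / Proposition 7.2: every even positive
1-homogeneous `H ∈ C²(ℝ² \ {0})` with strictly convex unit ball satisfying condition (7.1)
has, up to a rotation and a homothety of the plane, a unit ball of the polar form (7.7)
generated by some `C²` function `r` on `[0, π/2]` satisfying (7.3) a.e. and (7.4). -/
theorem planar_classification (H : EuclideanSpace ℝ (Fin 2) → ℝ)
    (hreg : ContDiffOn ℝ 2 H {(0 : EuclideanSpace ℝ (Fin 2))}ᶜ)
    (heven : ∀ ξ : EuclideanSpace ℝ (Fin 2), H (-ξ) = H ξ)
    (hhom : ∀ t : ℝ, 0 < t → ∀ ξ : EuclideanSpace ℝ (Fin 2), ξ ≠ 0 → H (t • ξ) = t * H ξ)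
    (hpos : ∀ ξ : EuclideanSpace ℝ (Fin 2), ξ ≠ 0 → 0 < H ξ) (hH0 : H 0 = 0)
    (hconv : StrictConvex ℝ {ξ : EuclideanSpace ℝ (Fin 2) | H ξ < 1})
    (h71 : ∀ ξ η : EuclideanSpace ℝ (Fin 2),
      (⟪Psi H ξ, η⟫_ℝ = 0 ↔ ⟪ξ, Psi H η⟫_ℝ = 0)) :
    ∃ φ c : ℝ, 0 < c ∧ ∃ rstar : ℝ, 1 ≤ rstar ∧ ∃ r r1 r2 rt tau : ℝ → ℝ,
      r1 = derivWithin r (Icc 0 (π / 2)) ∧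
      r2 = derivWithin r1 (Icc 0 (π / 2)) ∧
      ContDiffOn ℝ 2 r (Icc 0 (π / 2)) ∧
      (∀ θ ∈ Icc (0 : ℝ) (π / 2), 0 < r θ) ∧
      (∀ᵐ θ ∂(volume : Measure ℝ), θ ∈ Icc (0 : ℝ) (π / 2) →
        r θ * r2 θ < 2 * r1 θ ^ 2 + r θ ^ 2) ∧
      r 0 = 1 ∧ r (π / 2) = rstar ∧ r1 0 = 0 ∧ r1 (π / 2) = 0 ∧
      (∀ η : ℝ, tau η = π / 2 + η - arctan (r1 η / r η)) ∧
      (∀ θ : ℝ, 0 < rt θ) ∧ Function.Periodic rt π ∧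
      (∀ θ ∈ Icc (0 : ℝ) (π / 2), rt θ = r θ) ∧
      (∀ η ∈ Icc (0 : ℝ) (π / 2),
        rt (tau η) = rstar * Real.sqrt (r η ^ 2 + r1 η ^ 2) / r η ^ 2) ∧
      (fun ξ : EuclideanSpace ℝ (Fin 2) => c • rot2 φ ξ) '' {ξ | H ξ ≤ 1}
        = {p : EuclideanSpace ℝ (Fin 2) | ∃ ρ θ : ℝ,
            0 ≤ ρ ∧ ρ ≤ rt θ ∧ θ ∈ Icc (0 : ℝ) (2 * π) ∧
            p = toE2 ![ρ * cos θ, ρ * sin θ]} :=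
  planar_classification_general H hreg heven hhom hpos hH0 h71

end
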